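/- For all s, t ∈ F \ F_{q^2} with s ∉ {t, t^(q^2)} and t ∉ {s, s^(q^2)}: the subspaces m_s and τ(m_t) of (F_{q^2})^4 intersect nontrivially (i.e., m_s ∩ τ(m_t) ≠ {0}) if and only if ρ̂(s,t) ∈ S₁, that is, if and only if ρ̂(s,t) is an element of F_q of absolute trace 1. -/
import Mathlib

/-- The cross-ratio type quantity ρ(s,t) of Hollmann–Xiang. -/
def rhoPW {F : Type*} [Field F] (q : ℕ) (s t : F) : F :=
  ((s + t) * (s ^ q ^ 2 + t ^ q ^ 2)) / ((s + t ^ q ^ 2) * (s ^ q ^ 2 + t))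

/-- ρ̂(s,t) = 1/(ρ(s,t) + ρ(s,t)⁻¹). -/
def rhoHatPW {F : Type*} [Field F] (q : ℕ) (s t : F) : F :=
  (rhoPW q s t + (rhoPW q s t)⁻¹)⁻¹

/-- The vector `X_λ(t)` spanning the line `m_𝐭`. -/
def XvecPW {F : Type*} [Field F] (q : ℕ) (t l : F) : Fin 4 → F :=
  ![l + l ^ q ^ 2,
    l * t ^ q + l ^ q ^ 2 * t ^ q ^ 3,
    l * t + l ^ q ^ 2 * t ^ q ^ 2,
    l * t ^ (q + 1) + l ^ q ^ 2 * t ^ (q ^ 2 + q ^ 3)]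

/-- The semilinear involution `τ : (X₁, X₂, X₃, X₄) ↦ (X₁^q, X₃^q, X₂^q, X₄^q)`. -/
def tauPW {F : Type*} [Field F] (q : ℕ) (X : Fin 4 → F) : Fin 4 → F :=
  ![X 0 ^ q, X 2 ^ q, X 1 ^ q, X 3 ^ q]

/-- The lines `m_𝐬` and `τ(m_𝐭)` meet nontrivially iff `ρ̂(s,t) ∈ S₁ = F_q \ T₀(q)`,
i.e. iff `ρ̂(s,t)` is an element of `F_q` of absolute trace 1. -/
theorem stmt_12 (h q : ℕ) (hh : 1 ≤ h) (hq : q = 2 ^ h)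
    (F : Type*) [Field F] [Fintype F] (hF : Fintype.card F = q ^ 4)
    (s t : F) (hs : s ^ q ^ 2 ≠ s) (ht : t ^ q ^ 2 ≠ t)
    (h1 : s ≠ t) (h2 : s ≠ t ^ q ^ 2) (h3 : t ≠ s ^ q ^ 2) :
    (∃ l m : F, XvecPW q s l = tauPW q (XvecPW q t m) ∧ XvecPW q s l ≠ 0) ↔
      ((rhoHatPW q s t) ^ q = rhoHatPW q s t ∧
        ∑ i ∈ Finset.range h, (rhoHatPW q s t) ^ 2 ^ i = 1) := by
  have hq0 : q ≠ 0 := by rw [hq]; positivity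
  have hq20 : q ^ 2 ≠ 0 := pow_ne_zero _ hq0
  -- characteristic 2
  have h2F : (2 : F) = 0 := by
    have hc := FiniteField.cast_card_eq_zero F
    rw [hF, hq] at hc
    push_cast at hc
    have h4 : ((2 : F) ^ h) ^ 4 = 0 := by exact_mod_cast hc
    have h5 : (2 : F) ^ h = 0 := (pow_eq_zero_iff (by norm_num)).mp h4
    exact (pow_eq_zero_iff (by omega)).mp h5
  haveI : CharP F 2 := by
    have hdvd : ringChar F ∣ 2 := by
      have := (CharP.cast_eq_zero_iff F (ringChar F) 2).mpr
      exact (CharP.cast_eq_zero_iff F (ringChar F) 2).mp (by exact_mod_cast h2F)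
    rcases (Nat.prime_two.eq_one_or_self_of_dvd _ hdvd) with h' | h'
    · exfalso
      have h1' : ((1 : ℕ) : F) = 0 := h' ▸ CharP.cast_eq_zero F (ringChar F)
      simp at h1'
    · exact h' ▸ ringChar.charP F
  haveI : Fact (Nat.Prime 2) := ⟨Nat.prime_two⟩
  have hsub : ∀ x y : F, x - y = x + y := fun x y => CharTwo.sub_eq_add x y
  have frob2 : ∀ (n : ℕ) (x y : F), (x + y) ^ 2 ^ n = x ^ 2 ^ n + y ^ 2 ^ n :=
    fun n x y => add_pow_char_pow x y 2 n
  have sub2 : ∀ (n : ℕ) (x y : F), (x - y) ^ 2 ^ n = x ^ 2 ^ n - y ^ 2 ^ n :=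
    fun n x y => sub_pow_char_pow (p := 2) x y n
  have frobq : ∀ x y : F, (x + y) ^ q = x ^ q + y ^ q := by
    intro x y; rw [hq]; exact frob2 h x y
  have subq : ∀ x y : F, (x - y) ^ q = x ^ q - y ^ q := by
    intro x y; rw [hq]; exact sub2 h x y
  have frobq2 : ∀ x y : F, (x + y) ^ q ^ 2 = x ^ q ^ 2 + y ^ q ^ 2 := by
    intro x y; rw [hq, ← pow_mul]; exact frob2 (h * 2) x y
  have subq2 : ∀ x y : F, (x - y) ^ q ^ 2 = x ^ q ^ 2 - y ^ q ^ 2 := by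
    intro x y; rw [hq, ← pow_mul]; exact sub2 (h * 2) x y
  have subq3 : ∀ x y : F, (x - y) ^ q ^ 3 = x ^ q ^ 3 - y ^ q ^ 3 := by
    intro x y; rw [hq, ← pow_mul]; exact sub2 (h * 3) x y
  have hq4 : ∀ x : F, x ^ q ^ 4 = x := by
    intro x; rw [← hF]; exact FiniteField.pow_card x
  -- collapse lemmas
  have e2q : ∀ x : F, (x ^ q ^ 2) ^ q = x ^ q ^ 3 := fun x => by
    rw [← pow_mul, (by ring : q ^ 2 * q = q ^ 3)]
  have eq2 : ∀ x : F, (x ^ q) ^ q ^ 2 = x ^ q ^ 3 := fun x => by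
    rw [← pow_mul, (by ring : q * q ^ 2 = q ^ 3)]
  have e22 : ∀ x : F, (x ^ q ^ 2) ^ q ^ 2 = x := fun x => by
    rw [← pow_mul, (by ring : q ^ 2 * q ^ 2 = q ^ 4)]; exact hq4 x
  have e32 : ∀ x : F, (x ^ q ^ 3) ^ q ^ 2 = x ^ q := fun x => by
    rw [← pow_mul, (by ring : q ^ 3 * q ^ 2 = q * q ^ 4), pow_mul]
    exact hq4 (x ^ q)
  -- nonvanishing facts
  have hs' : s ^ q ^ 2 - s ≠ 0 := sub_ne_zero.mpr hs
  have hss : s - s ^ q ^ 2 ≠ 0 := sub_ne_zero.mpr (Ne.symm hs)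
  have htt : t ^ q ^ 2 - t ≠ 0 := sub_ne_zero.mpr ht
  have hts : t - s ≠ 0 := sub_ne_zero.mpr (Ne.symm h1)
  have hts2 : t - s ^ q ^ 2 ≠ 0 := sub_ne_zero.mpr h3
  have ht2s : t ^ q ^ 2 - s ≠ 0 := sub_ne_zero.mpr (Ne.symm h2)
  have hA1 : t ^ q ^ 2 - s ^ q ^ 2 ≠ 0 := by
    rw [← subq2]; exact pow_ne_zero _ hts
  have hA2 : t ^ q - s ^ q ≠ 0 := by
    rw [← subq]; exact pow_ne_zero _ hts
  have hB2 : t ^ q ^ 3 - s ^ q ≠ 0 := by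
    have e : (t ^ q ^ 2 - s) ^ q = t ^ q ^ 3 - s ^ q := by rw [subq, e2q]
    rw [← e]; exact pow_ne_zero _ ht2s
  have hC2 : t ^ q - s ^ q ^ 3 ≠ 0 := by
    have e : (t - s ^ q ^ 2) ^ q = t ^ q - s ^ q ^ 3 := by rw [subq, e2q]
    rw [← e]; exact pow_ne_zero _ hts2
  have hD2 : t ^ q ^ 3 - s ^ q ^ 3 ≠ 0 := by
    rw [← subq3]; exact pow_ne_zero _ hts
  have hd : s ^ q ^ 3 - s ^ q ≠ 0 := by
    have e : (s ^ q ^ 2 - s) ^ q = s ^ q ^ 3 - s ^ q := by rw [subq, e2q]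
    rw [← e]; exact pow_ne_zero _ hs'
  -- ρ's numerator and denominator
  have hu : (s + t) * (s ^ q ^ 2 + t ^ q ^ 2) ≠ 0 := by
    apply mul_ne_zero
    · rw [← hsub]; exact sub_ne_zero.mpr h1
    · rw [← hsub]; intro h0; exact hA1 (by linear_combination -h0)
  have hv : (s + t ^ q ^ 2) * (s ^ q ^ 2 + t) ≠ 0 := by
    apply mul_ne_zero
    · rw [← hsub]; exact sub_ne_zero.mpr h2
    · rw [← hsub]; exact sub_ne_zero.mpr (Ne.symm h3)
  have huq : ((s + t) * (s ^ q ^ 2 + t ^ q ^ 2)) ^ q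
      = (s ^ q + t ^ q) * (s ^ q ^ 3 + t ^ q ^ 3) := by
    rw [mul_pow, frobq, frobq, e2q s, e2q t]
  have hvq' : ((s + t ^ q ^ 2) * (s ^ q ^ 2 + t)) ^ q
      = (s ^ q + t ^ q ^ 3) * (s ^ q ^ 3 + t ^ q) := by
    rw [mul_pow, frobq, frobq, e2q t, e2q s]
  -- STEP 1: reduce the geometric statement to existence of a `conjugate eigenvector`
  have main1 : (∃ l m : F, XvecPW q s l = tauPW q (XvecPW q t m) ∧ XvecPW q s l ≠ 0) ↔
      (∃ a : F, a ≠ 0 ∧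
        a * ((t ^ q ^ 2 - s ^ q ^ 2) * (t ^ q - s ^ q))
          + a ^ q ^ 2 * ((t - s ^ q ^ 2) * (t ^ q ^ 3 - s ^ q)) = 0 ∧
        a * ((t ^ q ^ 2 - s) * (t ^ q - s ^ q ^ 3))
          + a ^ q ^ 2 * ((t - s) * (t ^ q ^ 3 - s ^ q ^ 3)) = 0) := by
    constructor
    · rintro ⟨l, m, heq, hne⟩
      have c0 := congr_fun heq 0
      have c1 := congr_fun heq 1
      have c2 := congr_fun heq 2
      have c3 := congr_fun heq 3
      simp only [XvecPW, tauPW, Matrix.cons_val_zero, Matrix.cons_val_one, Matrix.head_cons,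
        Matrix.cons_val_two, Matrix.tail_cons, Matrix.cons_val_three] at c0 c1 c2 c3
      rw [frobq] at c0 c1 c2 c3
      have hl0 : l ≠ 0 := by
        intro hl
        apply hne
        funext i
        fin_cases i <;> simp [XvecPW, hl, zero_pow hq20]
      have hm0 : m ≠ 0 := by
        intro hm
        rw [hm] at c0 c2
        simp only [zero_pow hq20, zero_pow hq0, zero_mul, mul_zero, add_zero, zero_add] at c0 c2
        apply hl0
        have hls : l * (s - s ^ q ^ 2) = 0 := by linear_combination c2 - s ^ q ^ 2 * c0
        exact (mul_eq_zero.mp hls).resolve_right hss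
      refine ⟨m ^ q, pow_ne_zero _ hm0, ?_, ?_⟩
      · linear_combination (-1 : F) * c3 + s ^ q * c2 + s ^ q ^ 2 * c1
          - s ^ q ^ 2 * s ^ q * c0 - (m ^ q) ^ q ^ 2 * t ^ q ^ 3 * (hq4 t)
          + s ^ q * (m ^ q) ^ q ^ 2 * (hq4 t)
      · linear_combination (-1 : F) * c3 + s ^ q ^ 3 * c2 + s * c1
          - s * s ^ q ^ 3 * c0 - (m ^ q) ^ q ^ 2 * t ^ q ^ 3 * (hq4 t)
          + s ^ q ^ 3 * (m ^ q) ^ q ^ 2 * (hq4 t)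
    · rintro ⟨a, ha0, hIa, hIIa⟩
      set l := (a * (s ^ q ^ 3 - t ^ q) + a ^ q ^ 2 * (s ^ q ^ 3 - t ^ q ^ 3)) / (s ^ q ^ 3 - s ^ q)
        with hldef
      have hl : l * (s ^ q ^ 3 - s ^ q)
          = a * (s ^ q ^ 3 - t ^ q) + a ^ q ^ 2 * (s ^ q ^ 3 - t ^ q ^ 3) :=
        div_mul_cancel₀ _ hd
      have hdbar : (s ^ q ^ 3 - s ^ q) ^ q ^ 2 = -(s ^ q ^ 3 - s ^ q) := by
        rw [subq2, e32 s, eq2 s]; ring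
      have hnum : (a * (s ^ q ^ 3 - t ^ q) + a ^ q ^ 2 * (s ^ q ^ 3 - t ^ q ^ 3)) ^ q ^ 2
          = a ^ q ^ 2 * (s ^ q - t ^ q ^ 3) + a * (s ^ q - t ^ q) := by
        rw [frobq2, mul_pow, mul_pow, subq2, subq2, e32 s, eq2 t, e32 t, e22 a]
      have hlb : l ^ q ^ 2 * (s ^ q ^ 3 - s ^ q)
          = a * (t ^ q - s ^ q) + a ^ q ^ 2 * (t ^ q ^ 3 - s ^ q) := by
        rw [hldef, div_pow, hdbar, hnum, div_mul_eq_mul_div,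
          div_eq_iff (neg_ne_zero.mpr hd)]
        ring
      have E1 : l + l ^ q ^ 2 = a + a ^ q ^ 2 :=
        mul_right_cancel₀ hd (by linear_combination hl + hlb)
      have E2 : l * s ^ q + l ^ q ^ 2 * s ^ q ^ 3 = a * t ^ q + a ^ q ^ 2 * t ^ q ^ 3 :=
        mul_right_cancel₀ hd (by linear_combination s ^ q * hl + s ^ q ^ 3 * hlb)
      have E3 : l * s + l ^ q ^ 2 * s ^ q ^ 2 = a * t ^ q ^ 2 + a ^ q ^ 2 * t :=
        mul_right_cancel₀ hd (by linear_combination s * hl + s ^ q ^ 2 * hlb - hIa + hIIa)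
      have E4 : l * s ^ (q + 1) + l ^ q ^ 2 * s ^ (q ^ 2 + q ^ 3)
          = a * t ^ (q ^ 2 + q) + a ^ q ^ 2 * (t ^ q ^ 3 * t) := by
        linear_combination s ^ q * E3 + s ^ q ^ 2 * E2 - s ^ q ^ 2 * s ^ q * E1 - hIa
      have hl0 : l ≠ 0 := by
        intro hl'
        rw [hl'] at E1 E3
        simp only [zero_pow hq20, zero_add, zero_mul, add_zero] at E1 E3
        have hz : a * (t ^ q ^ 2 - t) = 0 := by linear_combination t * E1 - E3
        exact ha0 ((mul_eq_zero.mp hz).resolve_right htt)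
      refine ⟨l, a ^ q ^ 3, ?_, ?_⟩
      · have V0 : XvecPW q s l 0 = tauPW q (XvecPW q t (a ^ q ^ 3)) 0 := by
          simp only [XvecPW, tauPW, Matrix.cons_val_zero, Matrix.cons_val_one, Matrix.head_cons,
            Matrix.cons_val_two, Matrix.tail_cons, Matrix.cons_val_three]
          rw [frobq]
          linear_combination E1 - hq4 a - hq4 (a ^ q ^ 2)
        have V1 : XvecPW q s l 1 = tauPW q (XvecPW q t (a ^ q ^ 3)) 1 := by
          simp only [XvecPW, tauPW, Matrix.cons_val_zero, Matrix.cons_val_one, Matrix.head_cons,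
            Matrix.cons_val_two, Matrix.tail_cons, Matrix.cons_val_three]
          rw [frobq]
          linear_combination E2 - t ^ q * hq4 a - t ^ q ^ 3 * hq4 (a ^ q ^ 2)
        have V2 : XvecPW q s l 2 = tauPW q (XvecPW q t (a ^ q ^ 3)) 2 := by
          simp only [XvecPW, tauPW, Matrix.cons_val_zero, Matrix.cons_val_one, Matrix.head_cons,
            Matrix.cons_val_two, Matrix.tail_cons, Matrix.cons_val_three]
          rw [frobq]
          linear_combination E3 - t ^ q ^ 2 * hq4 a - t ^ q ^ 4 * hq4 (a ^ q ^ 2)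
            - a ^ q ^ 2 * hq4 t
        have V3 : XvecPW q s l 3 = tauPW q (XvecPW q t (a ^ q ^ 3)) 3 := by
          simp only [XvecPW, tauPW, Matrix.cons_val_zero, Matrix.cons_val_one, Matrix.head_cons,
            Matrix.cons_val_two, Matrix.tail_cons, Matrix.cons_val_three]
          rw [frobq]
          linear_combination E4 - t ^ (q ^ 2 + q) * hq4 a
            - t ^ q ^ 3 * t ^ q ^ 4 * hq4 (a ^ q ^ 2) - a ^ q ^ 2 * t ^ q ^ 3 * hq4 t
        funext i
        fin_cases i
        exacts [V0, V1, V2, V3]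
      · intro hX
        apply hl0
        have d0 := congr_fun hX 0
        have d2 := congr_fun hX 2
        simp only [XvecPW, Matrix.cons_val_zero, Matrix.cons_val_two, Matrix.tail_cons,
          Matrix.head_cons, Pi.zero_apply] at d0 d2
        have hz : l * (s - s ^ q ^ 2) = 0 := by linear_combination d2 - s ^ q ^ 2 * d0
        exact (mul_eq_zero.mp hz).resolve_right hss
  -- STEP 2: existence of such `a` iff ρ^(q+1) = 1
  have main2 : (∃ a : F, a ≠ 0 ∧
        a * ((t ^ q ^ 2 - s ^ q ^ 2) * (t ^ q - s ^ q))
          + a ^ q ^ 2 * ((t - s ^ q ^ 2) * (t ^ q ^ 3 - s ^ q)) = 0 ∧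
        a * ((t ^ q ^ 2 - s) * (t ^ q - s ^ q ^ 3))
          + a ^ q ^ 2 * ((t - s) * (t ^ q ^ 3 - s ^ q ^ 3)) = 0) ↔
      (rhoPW q s t) ^ (q + 1) = 1 := by
    have hrho : rhoPW q s t
        = ((s + t) * (s ^ q ^ 2 + t ^ q ^ 2)) / ((s + t ^ q ^ 2) * (s ^ q ^ 2 + t)) := rfl
    have hvq : ((s + t ^ q ^ 2) * (s ^ q ^ 2 + t)) ^ (q + 1) ≠ 0 := pow_ne_zero _ hv
    constructor
    · rintro ⟨a, ha0, hIa, hIIa⟩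
      have key : a * a ^ q ^ 2 *
          ((t ^ q ^ 2 - s ^ q ^ 2) * (t ^ q - s ^ q) * ((t - s) * (t ^ q ^ 3 - s ^ q ^ 3))
            - (t ^ q ^ 2 - s) * (t ^ q - s ^ q ^ 3) * ((t - s ^ q ^ 2) * (t ^ q ^ 3 - s ^ q))) = 0 := by
        linear_combination (a ^ q ^ 2 * ((t - s) * (t ^ q ^ 3 - s ^ q ^ 3))) * hIa
          - (a ^ q ^ 2 * ((t - s ^ q ^ 2) * (t ^ q ^ 3 - s ^ q))) * hIIa
      have hAD : (t ^ q ^ 2 - s ^ q ^ 2) * (t ^ q - s ^ q) * ((t - s) * (t ^ q ^ 3 - s ^ q ^ 3))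
          = (t ^ q ^ 2 - s) * (t ^ q - s ^ q ^ 3) * ((t - s ^ q ^ 2) * (t ^ q ^ 3 - s ^ q)) := by
        have hne' : a * a ^ q ^ 2 ≠ 0 := mul_ne_zero ha0 (pow_ne_zero _ ha0)
        have hz := (mul_eq_zero.mp key).resolve_left hne'
        exact sub_eq_zero.mp hz
      rw [hrho, div_pow, div_eq_one_iff_eq hvq, pow_succ _ q, pow_succ _ q, huq, hvq']
      simp only [CharTwo.sub_eq_add] at hAD
      linear_combination hAD
    · intro hR1
      rw [hrho, div_pow, div_eq_one_iff_eq hvq] at hR1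
      have hW : (t ^ q ^ 2 - s ^ q ^ 2) * (t ^ q - s ^ q) * ((t - s) * (t ^ q ^ 3 - s ^ q ^ 3))
          = (t ^ q ^ 2 - s) * (t ^ q - s ^ q ^ 3) * ((t - s ^ q ^ 2) * (t ^ q ^ 3 - s ^ q)) := by
        simp only [CharTwo.sub_eq_add]
        rw [pow_succ _ q, pow_succ _ q, huq, hvq'] at hR1
        linear_combination hR1
      have hB : (t - s ^ q ^ 2) * (t ^ q ^ 3 - s ^ q) ≠ 0 := mul_ne_zero hts2 hB2
      have hC0 : (t ^ q ^ 2 - s) * (t ^ q - s ^ q ^ 3) ≠ 0 := mul_ne_zero ht2s hC2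
      set c := -(((t ^ q ^ 2 - s ^ q ^ 2) * (t ^ q - s ^ q)) / ((t - s ^ q ^ 2) * (t ^ q ^ 3 - s ^ q)))
        with hcdef
      have hc0 : c ≠ 0 := neg_ne_zero.mpr (div_ne_zero (mul_ne_zero hA1 hA2) hB)
      have hc1 : c * ((t - s ^ q ^ 2) * (t ^ q ^ 3 - s ^ q))
          = -((t ^ q ^ 2 - s ^ q ^ 2) * (t ^ q - s ^ q)) := by
        rw [hcdef, neg_mul, div_mul_cancel₀ _ hB]
      have hc2 : c * ((t - s) * (t ^ q ^ 3 - s ^ q ^ 3))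
          = -((t ^ q ^ 2 - s) * (t ^ q - s ^ q ^ 3)) := by
        rw [hcdef, neg_mul, neg_inj, div_mul_eq_mul_div, div_eq_iff hB]
        linear_combination hW
      have heven : Even (q ^ 2) := Nat.even_pow.mpr ⟨by rw [hq]; exact Nat.even_pow.mpr ⟨even_two, by omega⟩, by norm_num⟩
      have hcb : c ^ q ^ 2 = ((t - s) * (t ^ q ^ 3 - s ^ q ^ 3)) / ((t ^ q ^ 2 - s) * (t ^ q - s ^ q ^ 3)) := by
        rw [hcdef, heven.neg_pow, div_pow, mul_pow, mul_pow, subq2, subq2, subq2, subq2,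
          e22 t, e22 s, eq2 t, eq2 s, e32 t]
      have hcq2 : c ^ q ^ 2 * c = 1 := by
        have hm1 : c ^ q ^ 2 * c = -1 := by
          rw [hcb, div_mul_eq_mul_div, div_eq_iff hC0]
          linear_combination hc2
        rw [hm1, CharTwo.neg_eq]
      have hcinv : c ^ q ^ 2 = c⁻¹ := eq_inv_of_mul_eq_one_left hcq2
      obtain ⟨θ, hθ⟩ : ∃ θ : F, θ + c⁻¹ * θ ^ q ^ 2 ≠ 0 := by
        by_cases hcs : s + c⁻¹ * s ^ q ^ 2 ≠ 0
        · exact ⟨s, hcs⟩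
        · push_neg at hcs
          refine ⟨1, ?_⟩
          rw [one_pow, mul_one]
          intro h10
          have hci : c⁻¹ = 1 := by
            have hci' : c⁻¹ = -1 := by linear_combination h10
            rw [CharTwo.neg_eq] at hci'; exact hci'
          rw [hci, one_mul] at hcs
          apply hs
          have : s ^ q ^ 2 = -s := by linear_combination hcs
          rw [CharTwo.neg_eq] at this; exact this
      set a := θ + c⁻¹ * θ ^ q ^ 2 with hadef
      have hcc : c * c⁻¹ = 1 := mul_inv_cancel₀ hc0
      have haconj : a ^ q ^ 2 = c * a := by
        rw [hadef, frobq2, mul_pow, e22 θ, inv_pow, hcinv, inv_inv]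
        linear_combination -θ ^ q ^ 2 * hcc
      exact ⟨a, hθ, by rw [haconj]; linear_combination a * hc1,
        by rw [haconj]; linear_combination a * hc2⟩
  -- STEP 3: ρ^(q+1) = 1 iff trace condition on ρ̂
  set R := rhoPW q s t with hRdef
  have hRuv : R = ((s + t) * (s ^ q ^ 2 + t ^ q ^ 2)) / ((s + t ^ q ^ 2) * (s ^ q ^ 2 + t)) := rfl
  have hR0 : R ≠ 0 := by rw [hRuv]; exact div_ne_zero hu hv
  have hRne1 : R ≠ 1 := by
    rw [hRuv]
    intro hval
    have huv : (s + t) * (s ^ q ^ 2 + t ^ q ^ 2) = (s + t ^ q ^ 2) * (s ^ q ^ 2 + t) :=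
      (div_eq_one_iff_eq hv).mp hval
    have hz : (s ^ q ^ 2 - s) * (t ^ q ^ 2 - t) = 0 := by linear_combination -huv
    exact ((mul_eq_zero.mp hz).resolve_left hs' |> htt)
  have h1R : (1 : F) + R ≠ 0 := by
    intro h0
    apply hRne1
    have hmm : R = -1 := by linear_combination h0
    rw [CharTwo.neg_eq] at hmm; exact hmm
  set w := (1 + R)⁻¹ with hwdef
  have hw1 : w * (1 + R) = 1 := inv_mul_cancel₀ h1R
  -- ρ̂ = w² + w
  have hb : rhoHatPW q s t = w ^ 2 + w := by
    have hb1 : (R + R⁻¹) * R = (1 + R) ^ 2 := by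
      rw [add_mul, inv_mul_cancel₀ hR0]
      linear_combination -R * h2F
    have hb2 : R + R⁻¹ = (1 + R) ^ 2 / R := (eq_div_iff hR0).mpr hb1
    have hb3 : rhoHatPW q s t = R * w ^ 2 := by
      show (R + R⁻¹)⁻¹ = R * w ^ 2
      rw [hb2, inv_div, hwdef, div_eq_mul_inv, ← inv_pow, mul_comm]
    have hb4 : w ^ 2 + w = R * w ^ 2 := by
      linear_combination w * hw1 + (w - R * w ^ 2) * h2F
    rw [hb3, ← hb4]
  have hTsum : ∑ i ∈ Finset.range h, (rhoHatPW q s t) ^ 2 ^ i = w ^ q + w := by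
    have hterm : ∀ i ∈ Finset.range h,
        (rhoHatPW q s t) ^ 2 ^ i = w ^ 2 ^ (i + 1) - w ^ 2 ^ i := by
      intro i _
      rw [hb, ← hsub, sub2 i (w ^ 2) w, ← pow_mul, (by rw [pow_succ]; ring : 2 * 2 ^ i = 2 ^ (i + 1))]
    calc ∑ i ∈ Finset.range h, (rhoHatPW q s t) ^ 2 ^ i
        = ∑ i ∈ Finset.range h, (w ^ 2 ^ (i + 1) - w ^ 2 ^ i) := Finset.sum_congr rfl hterm
      _ = w ^ 2 ^ h - w ^ 2 ^ 0 := Finset.sum_range_sub (fun i => w ^ 2 ^ i) h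
      _ = w ^ q + w := by rw [← hq, pow_zero, pow_one, hsub]
  have main3 : R ^ (q + 1) = 1 ↔
      ((rhoHatPW q s t) ^ q = rhoHatPW q s t ∧
        ∑ i ∈ Finset.range h, (rhoHatPW q s t) ^ 2 ^ i = 1) := by
    constructor
    · intro hn
      have hRq : R ^ q = R⁻¹ := by
        have hx : R ^ q * R = 1 := by rw [← pow_succ]; exact hn
        exact eq_inv_of_mul_eq_one_left hx
      constructor
      · show ((R + R⁻¹)⁻¹) ^ q = (R + R⁻¹)⁻¹
        rw [inv_pow]
        congr 1
        rw [frobq, inv_pow, hRq, inv_inv]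
        ring
      · rw [hTsum]
        have hwq : w ^ q = (1 + R⁻¹)⁻¹ := by
          rw [hwdef, inv_pow, frobq, one_pow, hRq]
        have e : (1 + R⁻¹) = (1 + R) * R⁻¹ := by
          rw [add_mul, one_mul, mul_inv_cancel₀ hR0, add_comm]
        rw [hwq, e, mul_inv_rev, inv_inv, hwdef]
        have : R * (1 + R)⁻¹ + (1 + R)⁻¹ = (1 + R) * (1 + R)⁻¹ := by ring
        rw [this, mul_inv_cancel₀ h1R]
    · rintro ⟨-, hT⟩
      rw [hTsum] at hT
      have e1 : w ^ q = (1 + R ^ q)⁻¹ := by rw [hwdef, inv_pow, frobq, one_pow]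
      have h1Rq : (1 : F) + R ^ q ≠ 0 := by
        intro h0
        have : (1 + R) ^ q = 0 := by rw [frobq, one_pow]; exact h0
        exact pow_ne_zero q h1R this
      rw [e1, hwdef] at hT
      have k1 : (1 + R ^ q)⁻¹ * (1 + R ^ q) = 1 := inv_mul_cancel₀ h1Rq
      have k2 : (1 + R)⁻¹ * (1 + R) = 1 := inv_mul_cancel₀ h1R
      have hmul : ((1 + R ^ q)⁻¹ + (1 + R)⁻¹) * ((1 + R ^ q) * (1 + R))
          = 1 * ((1 + R ^ q) * (1 + R)) := by rw [hT]
      linear_combination -hmul + (1 + R) * k1 + (1 + R ^ q) * k2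
  exact main1.trans (main2.trans main3)
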